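/- arXiv:1910.08782 — 3 statements merged into one kernel-verified Lean document; each statement's English description precedes it below -/
import Mathlib

section
/- (Classification of vectors of type (b) in L₄) Let c ∈ ℤ⁴ be nonzero. Then cᵀG₄⁻¹c = 2/5 and the least positive integer k with k·G₄⁻¹c ∈ ℤ⁴ equals 5 if and only if c or −c belongs to the set {(0,1,1,0), (0,1,−1,0), (0,1,0,1), (0,1,0,−1), (0,0,1,1), (0,0,1,−1)}. -/
/-!
`G4⁻¹` is `1/10` times the integral matrix `[[4,-1,-1,-1],[-1,2,0,0],[-1,0,2,0],[-1,0,0,2]]`,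
and for `c = (a, b, d, e)` completing squares gives
`20 · cᵀG4⁻¹c = (2b - a)² + (2d - a)² + (2e - a)² + 5a²`.
If `5 · G4⁻¹c` is integral then `10 ∣ 5(2b - a)`, so `a` is even; norm `2/5` makes the sum
of squares `8`, which leaves only `a = 0` and `b² + d² + e² = 2`.
-/

open Matrix

/-- The Gram matrix of the even positive definite lattice `L₄` (determinant 500). -/
def G4 : Matrix (Fin 4) (Fin 4) ℚ :=
  !![4, 2, 2, 2; 2, 6, 1, 1; 2, 1, 6, 1; 2, 1, 1, 6]

theorem exists_int_eq_natCast_mul_intCast_div_iff (k : ℕ) {n d : ℤ} (hd : d ≠ 0) :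
    (∃ m : ℤ, (k : ℚ) * ((n : ℚ) / d) = m) ↔ d ∣ k * n := by
  have hd' : (d : ℚ) ≠ 0 := Int.cast_ne_zero.mpr hd
  refine exists_congr fun m => ?_
  rw [mul_div_assoc', div_eq_iff hd', mul_comm (m : ℚ)]
  norm_cast

theorem G4_inv : G4⁻¹ = !![2/5, -1/10, -1/10, -1/10; -1/10, 1/5, 0, 0;
    -1/10, 0, 1/5, 0; -1/10, 0, 0, 1/5] :=
  inv_eq_right_inv <| by
    ext i j
    fin_cases i <;> fin_cases j <;> norm_num [G4, mul_apply, Fin.sum_univ_succ, one_apply]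

section Coordinates

variable (a b d e : ℤ)

theorem G4_inv_mulVec :
    G4⁻¹ *ᵥ (fun i => ((![a, b, d, e] i : ℤ) : ℚ)) =
      ![((4 * a - b - d - e : ℤ) : ℚ) / 10, ((2 * b - a : ℤ) : ℚ) / 10,
        ((2 * d - a : ℤ) : ℚ) / 10, ((2 * e - a : ℤ) : ℚ) / 10] := by
  rw [G4_inv]
  ext i
  fin_cases i <;>
    simp only [mulVec, dotProduct, Fin.sum_univ_four, of_apply, cons_val', cons_val_fin_one,
      cons_val_zero, cons_val_one, cons_val, Fin.isValue] <;> push_cast <;> ring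

theorem dotProduct_G4_inv_mulVec :
    (fun i => ((![a, b, d, e] i : ℤ) : ℚ)) ⬝ᵥ G4⁻¹ *ᵥ (fun i => ((![a, b, d, e] i : ℤ) : ℚ)) =
      (((2 * b - a) ^ 2 + (2 * d - a) ^ 2 + (2 * e - a) ^ 2 + 5 * a ^ 2 : ℤ) : ℚ) / 20 := by
  rw [G4_inv_mulVec]
  simp only [dotProduct, Fin.sum_univ_four, cons_val_zero, cons_val_one, cons_val, Fin.isValue]
  push_cast
  ring

theorem dotProduct_G4_inv_mulVec_eq_two_fifths_iff :
    (fun i => ((![a, b, d, e] i : ℤ) : ℚ)) ⬝ᵥ G4⁻¹ *ᵥ (fun i => ((![a, b, d, e] i : ℤ) : ℚ)) =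
        2 / 5 ↔
      (2 * b - a) ^ 2 + (2 * d - a) ^ 2 + (2 * e - a) ^ 2 + 5 * a ^ 2 = 8 := by
  rw [dotProduct_G4_inv_mulVec, div_eq_iff (by norm_num),
    show (2 / 5 * 20 : ℚ) = ((8 : ℤ) : ℚ) by norm_num, Int.cast_inj]

theorem natCast_mul_G4_inv_mulVec_integral_iff (k : ℕ) :
    (∀ i, ∃ m : ℤ, (k : ℚ) * (G4⁻¹ *ᵥ (fun i => ((![a, b, d, e] i : ℤ) : ℚ))) i = m) ↔
      10 ∣ (k : ℤ) * (4 * a - b - d - e) ∧ 10 ∣ (k : ℤ) * (2 * b - a) ∧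
        10 ∣ (k : ℤ) * (2 * d - a) ∧ 10 ∣ (k : ℤ) * (2 * e - a) := by
  have h (n : ℤ) : (∃ m : ℤ, (k : ℚ) * ((n : ℚ) / 10) = m) ↔ 10 ∣ (k : ℤ) * n := by
    exact_mod_cast exists_int_eq_natCast_mul_intCast_div_iff k (n := n) (by norm_num : (10 : ℤ) ≠ 0)
  simp only [G4_inv_mulVec, Fin.forall_fin_succ, IsEmpty.forall_iff, and_true, cons_val_zero,
    cons_val_succ, h]

end Coordinates

theorem eq_neg_one_or_eq_zero_or_eq_one_of_sq_le_two {x : ℤ} (h : x ^ 2 ≤ 2) :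
    x = -1 ∨ x = 0 ∨ x = 1 := by
  have := abs_lt.mp (abs_lt_of_sq_lt_sq (show x ^ 2 < 2 ^ 2 by linarith) (by norm_num))
  omega

theorem sq_add_sq_add_sq_eq_two_iff (b d e : ℤ) :
    b ^ 2 + d ^ 2 + e ^ 2 = 2 ↔
      b = 1 ∧ d = 1 ∧ e = 0 ∨ b = 1 ∧ d = -1 ∧ e = 0 ∨ b = 1 ∧ d = 0 ∧ e = 1 ∨
      b = 1 ∧ d = 0 ∧ e = -1 ∨ b = 0 ∧ d = 1 ∧ e = 1 ∨ b = 0 ∧ d = 1 ∧ e = -1 ∨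
      b = -1 ∧ d = -1 ∧ e = 0 ∨ b = -1 ∧ d = 1 ∧ e = 0 ∨ b = -1 ∧ d = 0 ∧ e = -1 ∨
      b = -1 ∧ d = 0 ∧ e = 1 ∨ b = 0 ∧ d = -1 ∧ e = -1 ∨ b = 0 ∧ d = -1 ∧ e = 1 := by
  refine ⟨fun h => ?_, fun h => ?_⟩
  · have hb := eq_neg_one_or_eq_zero_or_eq_one_of_sq_le_two (x := b)
      (by nlinarith [sq_nonneg d, sq_nonneg e])
    have hd := eq_neg_one_or_eq_zero_or_eq_one_of_sq_le_two (x := d)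
      (by nlinarith [sq_nonneg b, sq_nonneg e])
    have he := eq_neg_one_or_eq_zero_or_eq_one_of_sq_le_two (x := e)
      (by nlinarith [sq_nonneg b, sq_nonneg d])
    rcases hb with rfl | rfl | rfl <;> rcases hd with rfl | rfl | rfl <;>
      rcases he with rfl | rfl | rfl <;> revert h <;> decide
  · rcases h with ⟨rfl, rfl, rfl⟩ | ⟨rfl, rfl, rfl⟩ | ⟨rfl, rfl, rfl⟩ | ⟨rfl, rfl, rfl⟩ |
      ⟨rfl, rfl, rfl⟩ | ⟨rfl, rfl, rfl⟩ | ⟨rfl, rfl, rfl⟩ | ⟨rfl, rfl, rfl⟩ |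
      ⟨rfl, rfl, rfl⟩ | ⟨rfl, rfl, rfl⟩ | ⟨rfl, rfl, rfl⟩ | ⟨rfl, rfl, rfl⟩ <;> decide

theorem eq_zero_of_two_dvd_of_sum_sq_eq_eight {a b d e : ℤ} (ha : 2 ∣ a)
    (h : (2 * b - a) ^ 2 + (2 * d - a) ^ 2 + (2 * e - a) ^ 2 + 5 * a ^ 2 = 8) : a = 0 := by
  obtain ⟨r, rfl⟩ := ha
  have : r ^ 2 ≤ 0 := by
    nlinarith [sq_nonneg (2 * b - 2 * r), sq_nonneg (2 * d - 2 * r), sq_nonneg (2 * e - 2 * r)]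
  simpa using this

theorem sum_sq_eq_eight_and_isLeast_five_iff (a b d e : ℤ) :
    ((2 * b - a) ^ 2 + (2 * d - a) ^ 2 + (2 * e - a) ^ 2 + 5 * a ^ 2 = 8 ∧
      IsLeast {k : ℕ | 0 < k ∧ 10 ∣ (k : ℤ) * (4 * a - b - d - e) ∧ 10 ∣ (k : ℤ) * (2 * b - a) ∧
        10 ∣ (k : ℤ) * (2 * d - a) ∧ 10 ∣ (k : ℤ) * (2 * e - a)} 5) ↔
      a = 0 ∧ b ^ 2 + d ^ 2 + e ^ 2 = 2 := by
  constructor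
  · rintro ⟨h, ⟨-, -, hb, -⟩, -⟩
    obtain rfl : a = 0 := eq_zero_of_two_dvd_of_sum_sq_eq_eight (by omega) h
    exact ⟨rfl, by linarith⟩
  · rintro ⟨rfl, h⟩
    rcases (sq_add_sq_add_sq_eq_two_iff b d e).1 h with ⟨rfl, rfl, rfl⟩ | ⟨rfl, rfl, rfl⟩ |
      ⟨rfl, rfl, rfl⟩ | ⟨rfl, rfl, rfl⟩ | ⟨rfl, rfl, rfl⟩ | ⟨rfl, rfl, rfl⟩ | ⟨rfl, rfl, rfl⟩ |
      ⟨rfl, rfl, rfl⟩ | ⟨rfl, rfl, rfl⟩ | ⟨rfl, rfl, rfl⟩ | ⟨rfl, rfl, rfl⟩ | ⟨rfl, rfl, rfl⟩ <;>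
      exact ⟨by norm_num, ⟨by norm_num, by omega⟩, fun k ⟨hk, hdvd⟩ => by omega⟩

theorem L4_type_b_classification_general (c : Fin 4 → ℤ) :
    ((fun i => (c i : ℚ)) ⬝ᵥ G4⁻¹.mulVec (fun i => (c i : ℚ)) = 2 / 5 ∧
      IsLeast {k : ℕ | 0 < k ∧
        ∀ i, ∃ m : ℤ, (k : ℚ) * G4⁻¹.mulVec (fun i => (c i : ℚ)) i = (m : ℚ)} 5) ↔
    (c = ![0, 1, 1, 0] ∨ c = ![0, 1, -1, 0] ∨ c = ![0, 1, 0, 1] ∨ c = ![0, 1, 0, -1] ∨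
      c = ![0, 0, 1, 1] ∨ c = ![0, 0, 1, -1] ∨
      -c = ![0, 1, 1, 0] ∨ -c = ![0, 1, -1, 0] ∨ -c = ![0, 1, 0, 1] ∨ -c = ![0, 1, 0, -1] ∨
      -c = ![0, 0, 1, 1] ∨ -c = ![0, 0, 1, -1]) := by
  obtain ⟨a, b, d, e, rfl⟩ : ∃ a b d e, c = ![a, b, d, e] :=
    ⟨c 0, c 1, c 2, c 3, by ext i; fin_cases i <;> rfl⟩
  simp only [dotProduct_G4_inv_mulVec_eq_two_fifths_iff, natCast_mul_G4_inv_mulVec_integral_iff,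
    sum_sq_eq_eight_and_isLeast_five_iff, sq_add_sq_add_sq_eq_two_iff, neg_cons, neg_empty,
    vecCons_inj, neg_eq_iff_eq_neg, neg_zero, neg_neg, and_true, ← and_or_left]

/-- Classification of vectors of type (b) in `L₄`: a nonzero `c ∈ ℤ⁴` has norm
`cᵀG₄⁻¹c = 2/5` and order `5` in the discriminant group iff `±c` is one of the six
listed vectors. -/
theorem L4_type_b_classification (c : Fin 4 → ℤ) (hc : c ≠ 0) :
    ((fun i => (c i : ℚ)) ⬝ᵥ G4⁻¹.mulVec (fun i => (c i : ℚ)) = 2 / 5 ∧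
      IsLeast {k : ℕ | 0 < k ∧
        ∀ i, ∃ m : ℤ, (k : ℚ) * G4⁻¹.mulVec (fun i => (c i : ℚ)) i = (m : ℚ)} 5) ↔
    (c = ![0, 1, 1, 0] ∨ c = ![0, 1, -1, 0] ∨ c = ![0, 1, 0, 1] ∨ c = ![0, 1, 0, -1] ∨
      c = ![0, 0, 1, 1] ∨ c = ![0, 0, 1, -1] ∨
      -c = ![0, 1, 1, 0] ∨ -c = ![0, 1, -1, 0] ∨ -c = ![0, 1, 0, 1] ∨ -c = ![0, 1, 0, -1] ∨
      -c = ![0, 0, 1, 1] ∨ -c = ![0, 0, 1, -1]) :=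
  L4_type_b_classification_general c
end

section
/- (Classification of vectors of type (c) in L₄) Let c ∈ ℤ⁴ be nonzero. Then cᵀG₄⁻¹c = 1/5 and the least positive integer k with k·G₄⁻¹c ∈ ℤ⁴ equals 10 if and only if c or −c belongs to the set {(0,1,0,0), (0,0,1,0), (0,0,0,1)}. -/
/-!
The matrix `10 • G₄⁻¹` is integral, and for `c ∈ ℤ⁴` twice its quadratic form is
`(2c₁ - c₀)² + (2c₂ - c₀)² + (2c₃ - c₀)² + 5c₀²`. The norm `cᵀG₄⁻¹c` is `1/5` exactly when this
sum of squares is `4`, which forces `c₀ = 0` and then `c₁² + c₂² + c₃² = 1`, i.e. `c = ±eⱼ` with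
`j ≠ 0`. For these vectors the first coordinate of `10 • G₄⁻¹c` is `∓1`, so no smaller multiple
of `G₄⁻¹c` is integral and the order is `10`.
-/

open Matrix

theorem Int.sum_sq_eq_one_iff {ι : Type*} [Fintype ι] [DecidableEq ι] (c : ι → ℤ) :
    ∑ i, c i ^ 2 = 1 ↔ ∃ i, c = Pi.single i 1 ∨ c = -Pi.single i 1 := by
  constructor
  · intro h
    obtain ⟨i, hi⟩ : ∃ i, c i ≠ 0 := by
      by_contra! h0
      simp [h0] at h
    have hsplit := Finset.add_sum_erase Finset.univ (fun j => c j ^ 2) (Finset.mem_univ i)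
    have hrest : ∑ j ∈ Finset.univ.erase i, c j ^ 2 = 0 := by
      have : 1 ≤ c i ^ 2 := by nlinarith [Int.one_le_abs hi, sq_abs (c i)]
      have : 0 ≤ ∑ j ∈ Finset.univ.erase i, c j ^ 2 := by positivity
      omega
    have hci : c i ^ 2 = 1 := by omega
    rw [Finset.sum_eq_zero_iff_of_nonneg (fun _ _ => sq_nonneg _)] at hrest
    refine ⟨i, (sq_eq_one_iff.mp hci).imp (fun h1 => ?_) (fun h1 => ?_)⟩ <;>
    · ext j
      by_cases hj : j = i
      · subst hj; simp [h1]
      · simpa [hj] using hrest j (by simp [hj])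
  · rintro ⟨i, rfl | rfl⟩ <;> simp [Pi.single_apply]

theorem isLeast_order_div_of_isUnit {ι : Type*} (w : ι → ℤ) {n : ℕ} (hn : 0 < n) {i₀ : ι}
    (hi₀ : IsUnit (w i₀)) :
    IsLeast {k : ℕ | 0 < k ∧ ∀ i, ∃ m : ℤ, (k : ℚ) * ((w i : ℚ) / n) = m} n := by
  refine ⟨⟨hn, fun i => ⟨w i, by field_simp⟩⟩, fun k ⟨hk, hint⟩ => ?_⟩
  obtain ⟨m, hm⟩ := hint i₀
  have hdvd : (n : ℤ) ∣ k * w i₀ := ⟨m, by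
    have : ((k * w i₀ : ℤ) : ℚ) = (n * m : ℤ) := by
      push_cast; rw [← hm]; field_simp
    exact_mod_cast this⟩
  exact Nat.le_of_dvd hk (Int.natCast_dvd_natCast.mp (hi₀.dvd_mul_right.mp hdvd))

def tenG4Inv : Matrix (Fin 4) (Fin 4) ℤ :=
  !![4, -1, -1, -1; -1, 2, 0, 0; -1, 0, 2, 0; -1, 0, 0, 2]

theorem G4_inv_eq : G4⁻¹ = (10 : ℚ)⁻¹ • tenG4Inv.map (↑) := by
  refine inv_eq_right_inv ?_
  ext i j
  fin_cases i <;> fin_cases j <;>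
    norm_num [G4, tenG4Inv, mul_apply, Fin.sum_univ_four, one_apply, cons_val_two, cons_val_three]

theorem G4_inv_mulVec_intCast (c : Fin 4 → ℤ) :
    G4⁻¹ *ᵥ (fun i => (c i : ℚ)) = fun i => ((tenG4Inv *ᵥ c) i : ℚ) / 10 := by
  ext i
  rw [G4_inv_eq, smul_mulVec, Pi.smul_apply, smul_eq_mul, inv_mul_eq_div]
  exact congrArg (· / (10 : ℚ)) (RingHom.map_mulVec (Int.castRingHom ℚ) tenG4Inv c i).symm

theorem dotProduct_G4_inv_mulVec_intCast (c : Fin 4 → ℤ) :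
    (fun i => (c i : ℚ)) ⬝ᵥ G4⁻¹ *ᵥ (fun i => (c i : ℚ)) =
      ((c ⬝ᵥ tenG4Inv *ᵥ c : ℤ) : ℚ) / 10 := by
  rw [G4_inv_mulVec_intCast]
  simp [dotProduct, Finset.sum_div, mul_div_assoc]

theorem two_mul_dotProduct_tenG4Inv_mulVec (c : Fin 4 → ℤ) :
    2 * (c ⬝ᵥ tenG4Inv *ᵥ c) =
      (2 * c 1 - c 0) ^ 2 + (2 * c 2 - c 0) ^ 2 + (2 * c 3 - c 0) ^ 2 + 5 * c 0 ^ 2 := by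
  simp only [dotProduct, mulVec, tenG4Inv, of_apply, cons_val', cons_val_fin_one,
    Fin.sum_univ_four, cons_val_zero, cons_val_one, cons_val]
  ring

theorem sum_sq_two_mul_sub_eq_four_iff (c : Fin 4 → ℤ) :
    (2 * c 1 - c 0) ^ 2 + (2 * c 2 - c 0) ^ 2 + (2 * c 3 - c 0) ^ 2 + 5 * c 0 ^ 2 = 4 ↔
      c 0 = 0 ∧ ∑ i, c i ^ 2 = 1 := by
  rw [Fin.sum_univ_four]
  constructor
  · intro h
    have h0 : c 0 = 0 := by
      have : c 0 ^ 2 < 1 := by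
        nlinarith [sq_nonneg (2 * c 1 - c 0), sq_nonneg (2 * c 2 - c 0), sq_nonneg (2 * c 3 - c 0)]
      simpa using this
    refine ⟨h0, ?_⟩
    rw [h0] at h ⊢
    linarith
  · rintro ⟨h0, h⟩
    rw [h0] at h ⊢
    linear_combination 4 * h

theorem G4_dual_norm_eq_one_fifth_iff (c : Fin 4 → ℤ) :
    (fun i => (c i : ℚ)) ⬝ᵥ G4⁻¹ *ᵥ (fun i => (c i : ℚ)) = 1 / 5 ↔
      c 0 = 0 ∧ ∃ i, c = Pi.single i 1 ∨ c = -Pi.single i 1 := by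
  rw [← Int.sum_sq_eq_one_iff, ← sum_sq_two_mul_sub_eq_four_iff,
    ← two_mul_dotProduct_tenG4Inv_mulVec, dotProduct_G4_inv_mulVec_intCast,
    div_eq_div_iff (by norm_num) (by norm_num)]
  norm_cast
  omega

theorem isLeast_order_G4_inv_mulVec_of_signed_single {c : Fin 4 → ℤ} (h0 : c 0 = 0) {i : Fin 4}
    (hc : c = Pi.single i 1 ∨ c = -Pi.single i 1) :
    IsLeast {k : ℕ | 0 < k ∧ ∀ j, ∃ m : ℤ, (k : ℚ) * (G4⁻¹ *ᵥ fun j => (c j : ℚ)) j = m} 10 := by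
  have hunit : IsUnit ((tenG4Inv *ᵥ c) 0) := by
    rw [Int.isUnit_iff]
    revert h0
    rcases hc with rfl | rfl <;> fin_cases i <;> decide
  simpa [G4_inv_mulVec_intCast] using isLeast_order_div_of_isUnit _ (by norm_num : 0 < 10) hunit

theorem L4_type_c_classification_general (c : Fin 4 → ℤ) :
    ((fun i => (c i : ℚ)) ⬝ᵥ G4⁻¹.mulVec (fun i => (c i : ℚ)) = 1 / 5 ∧
      IsLeast {k : ℕ | 0 < k ∧
        ∀ i, ∃ m : ℤ, (k : ℚ) * G4⁻¹.mulVec (fun i => (c i : ℚ)) i = (m : ℚ)} 10) ↔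
    (c = ![0, 1, 0, 0] ∨ c = ![0, 0, 1, 0] ∨ c = ![0, 0, 0, 1] ∨
      -c = ![0, 1, 0, 0] ∨ -c = ![0, 0, 1, 0] ∨ -c = ![0, 0, 0, 1]) := by
  have hsigned : (c 0 = 0 ∧ ∃ i, c = Pi.single i 1 ∨ c = -Pi.single i 1) ↔
      (c = ![0, 1, 0, 0] ∨ c = ![0, 0, 1, 0] ∨ c = ![0, 0, 0, 1] ∨
        -c = ![0, 1, 0, 0] ∨ -c = ![0, 0, 1, 0] ∨ -c = ![0, 0, 0, 1]) := by
    simp only [neg_eq_iff_eq_neg]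
    constructor
    · rintro ⟨h0, i, rfl | rfl⟩ <;> revert h0 <;> fin_cases i <;> decide
    · rintro (rfl | rfl | rfl | rfl | rfl | rfl) <;> decide
  rw [← hsigned, ← G4_dual_norm_eq_one_fifth_iff]
  refine ⟨And.left, fun hnorm => ⟨hnorm, ?_⟩⟩
  obtain ⟨h0, i, hc⟩ := (G4_dual_norm_eq_one_fifth_iff c).mp hnorm
  exact isLeast_order_G4_inv_mulVec_of_signed_single h0 hc

/-- Classification of vectors of type (c) in `L₄`: a nonzero `c ∈ ℤ⁴` has norm
`cᵀG₄⁻¹c = 1/5` and order `10` in the discriminant group iff `±c` is one of the three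
listed vectors. -/
theorem L4_type_c_classification (c : Fin 4 → ℤ) (hc : c ≠ 0) :
    ((fun i => (c i : ℚ)) ⬝ᵥ G4⁻¹.mulVec (fun i => (c i : ℚ)) = 1 / 5 ∧
      IsLeast {k : ℕ | 0 < k ∧
        ∀ i, ∃ m : ℤ, (k : ℚ) * G4⁻¹.mulVec (fun i => (c i : ℚ)) i = (m : ℚ)} 10) ↔
    (c = ![0, 1, 0, 0] ∨ c = ![0, 0, 1, 0] ∨ c = ![0, 0, 0, 1] ∨
      -c = ![0, 1, 0, 0] ∨ -c = ![0, 0, 1, 0] ∨ -c = ![0, 0, 0, 1]) :=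
  L4_type_c_classification_general c
end

section
/- (Classification of vectors of type (iii) in L₆) Let c ∈ ℤ⁶ be nonzero. Then cᵀG₆⁻¹c = 1/3 and the least positive integer k with k·G₆⁻¹c ∈ ℤ⁶ equals 6 if and only if c or −c belongs to the set {(0,1,0,0,0,0), (0,0,0,0,0,1)}. -/
/-!
`N = 6G₆⁻¹` is integral, so `cᵀG₆⁻¹c = Q(c)/6` for the integral form `Q(c) = cᵀNc`, and
`6·G₆⁻¹c ∈ ℤ⁶` always. Completing squares,
`2Q = (2c₀ - c₁)² + 3c₁² + (2c₀ + 4c₄ - c₅)² + 3c₅² + 2(2c₂ + c₃)² + 6c₃²`, so `Q(c) = 2` bounds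
every coordinate by 1 and leaves only `±e₁, ±e₅`. For these the first coordinate of `Nc` is `∓1`,
a unit mod 6, so the order of `G₆⁻¹c` is exactly 6.
-/

open Matrix

/-- The Gram matrix of the even positive definite lattice `L₆` (determinant 108). -/
def G6 : Matrix (Fin 6) (Fin 6) ℚ :=
  !![4, 2, 0, 0, -2, 0;
     2, 4, 0, 0, -1, 0;
     0, 0, 2, -1, 0, 0;
     0, 0, -1, 2, 0, 0;
     -2, -1, 0, 0, 2, 1;
     0, 0, 0, 0, 1, 4]

def sixG6Inv : Matrix (Fin 6) (Fin 6) ℤ :=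
  !![4, -1, 0, 0, 4, -1;
     -1, 2, 0, 0, 0, 0;
     0, 0, 4, 2, 0, 0;
     0, 0, 2, 4, 0, 0;
     4, 0, 0, 0, 8, -2;
     -1, 0, 0, 0, -2, 2]

theorem G6_inv_eq_inv_six_smul : G6⁻¹ = (6 : ℚ)⁻¹ • sixG6Inv.map (Int.cast) := by
  refine inv_eq_right_inv ?_
  ext i j
  fin_cases i <;> fin_cases j <;> norm_num [G6, sixG6Inv, mul_apply, Fin.sum_univ_succ, one_apply]

theorem G6_inv_mulVec_intCast (c : Fin 6 → ℤ) :
    G6⁻¹ *ᵥ (fun i => (c i : ℚ)) = fun i => ((sixG6Inv *ᵥ c) i : ℚ) / 6 := by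
  ext i
  rw [G6_inv_eq_inv_six_smul, smul_mulVec, Pi.smul_apply, ← eq_intCast (Int.castRingHom ℚ),
    RingHom.map_mulVec, smul_eq_mul, inv_mul_eq_div]
  rfl

theorem intCast_dotProduct_G6_inv_mulVec (c : Fin 6 → ℤ) :
    (fun i => (c i : ℚ)) ⬝ᵥ G6⁻¹ *ᵥ (fun i => (c i : ℚ)) =
      ((c ⬝ᵥ sixG6Inv *ᵥ c : ℤ) : ℚ) / 6 := by
  rw [G6_inv_mulVec_intCast, ← eq_intCast (Int.castRingHom ℚ), RingHom.map_dotProduct]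
  simp only [dotProduct, div_eq_mul_inv, Finset.sum_mul, mul_assoc]
  rfl

theorem two_mul_dotProduct_sixG6Inv_mulVec (x : Fin 6 → ℤ) :
    2 * (x ⬝ᵥ sixG6Inv *ᵥ x) = (2 * x 0 - x 1) ^ 2 + 3 * x 1 ^ 2 + (2 * x 0 + 4 * x 4 - x 5) ^ 2
      + 3 * x 5 ^ 2 + 2 * (2 * x 2 + x 3) ^ 2 + 6 * x 3 ^ 2 := by
  simp only [dotProduct, mulVec, Fin.sum_univ_six, sixG6Inv, of_apply, cons_val, cons_val_zero,
    cons_val_one]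
  ring

theorem isLeast_order_intCast_div_of_isCoprime {ι : Type*} (w : ι → ℤ) {N : ℕ} (hN : 0 < N)
    {i₀ : ι} (h : IsCoprime (w i₀) N) :
    IsLeast {k : ℕ | 0 < k ∧ ∀ i, ∃ m : ℤ, (k : ℚ) * ((w i : ℚ) / N) = m} N := by
  refine ⟨⟨hN, fun i => ⟨w i, by field_simp⟩⟩, ?_⟩
  rintro k ⟨hk, hint⟩
  obtain ⟨m, hm⟩ := hint i₀
  have hdvd : (N : ℤ) ∣ k * w i₀ := ⟨m, by field_simp at hm; exact_mod_cast hm⟩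
  exact Nat.le_of_dvd hk (Int.natCast_dvd_natCast.mp (h.symm.dvd_of_dvd_mul_right hdvd))

theorem eq_or_neg_eq_of_dotProduct_sixG6Inv_mulVec_eq_two (x : Fin 6 → ℤ)
    (h : x ⬝ᵥ sixG6Inv *ᵥ x = 2) :
    x = ![0, 1, 0, 0, 0, 0] ∨ x = ![0, 0, 0, 0, 0, 1] ∨
      -x = ![0, 1, 0, 0, 0, 0] ∨ -x = ![0, 0, 0, 0, 0, 1] := by
  have hsos := two_mul_dotProduct_sixG6Inv_mulVec x
  obtain ⟨a, b, c, d, e, f, rfl⟩ : ∃ a b c d e f : ℤ, x = ![a, b, c, d, e, f] :=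
    ⟨x 0, x 1, x 2, x 3, x 4, x 5, by ext i; fin_cases i <;> rfl⟩
  simp only [h, cons_val] at hsos
  have := sq_nonneg (2 * a - b)
  have := sq_nonneg b
  have := sq_nonneg (2 * a + 4 * e - f)
  have := sq_nonneg f
  have := sq_nonneg (2 * c + d)
  have := sq_nonneg d
  obtain ⟨_, _⟩ := abs_lt_of_sq_lt_sq' (a := d) (b := 1) (by linarith) (by norm_num)
  obtain ⟨_, _⟩ := abs_lt_of_sq_lt_sq' (a := 2 * c + d) (b := 2) (by linarith) (by norm_num)
  obtain ⟨_, _⟩ := abs_lt_of_sq_lt_sq' (a := b) (b := 2) (by linarith) (by norm_num)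
  obtain ⟨_, _⟩ := abs_lt_of_sq_lt_sq' (a := f) (b := 2) (by linarith) (by norm_num)
  obtain ⟨_, _⟩ := abs_lt_of_sq_lt_sq' (a := 2 * a - b) (b := 3) (by linarith) (by norm_num)
  obtain ⟨_, _⟩ := abs_lt_of_sq_lt_sq' (a := 2 * a + 4 * e - f) (b := 3) (by linarith) (by norm_num)
  obtain ⟨rfl, rfl⟩ : c = 0 ∧ d = 0 := by omega
  obtain ⟨_, _⟩ : -1 ≤ a ∧ a ≤ 1 := by omega
  obtain ⟨_, _⟩ : -1 ≤ e ∧ e ≤ 1 := by omega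
  interval_cases b <;> interval_cases f <;> interval_cases a <;> interval_cases e <;>
    first | (norm_num at hsos; done) | decide

theorem L6_type_iii_classification_general (c : Fin 6 → ℤ) :
    ((fun i => (c i : ℚ)) ⬝ᵥ G6⁻¹.mulVec (fun i => (c i : ℚ)) = 1 / 3 ∧
      IsLeast {k : ℕ | 0 < k ∧
        ∀ i, ∃ m : ℤ, (k : ℚ) * G6⁻¹.mulVec (fun i => (c i : ℚ)) i = (m : ℚ)} 6) ↔
    (c = ![0, 1, 0, 0, 0, 0] ∨ c = ![0, 0, 0, 0, 0, 1] ∨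
      -c = ![0, 1, 0, 0, 0, 0] ∨ -c = ![0, 0, 0, 0, 0, 1]) := by
  have hnorm : ((c ⬝ᵥ sixG6Inv *ᵥ c : ℤ) : ℚ) / 6 = 1 / 3 ↔ c ⬝ᵥ sixG6Inv *ᵥ c = 2 := by
    rw [div_eq_div_iff (by norm_num) (by norm_num)]
    norm_cast
    omega
  rw [intCast_dotProduct_G6_inv_mulVec, hnorm, G6_inv_mulVec_intCast]
  refine ⟨fun h => eq_or_neg_eq_of_dotProduct_sixG6Inv_mulVec_eq_two c h.1, fun h => ?_⟩
  simp only [neg_eq_iff_eq_neg] at h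
  have horder :=
    isLeast_order_intCast_div_of_isCoprime (sixG6Inv *ᵥ c) (N := 6) (by norm_num) (i₀ := 0)
  push_cast at horder
  refine ⟨?_, horder ?_⟩ <;> rcases h with rfl | rfl | rfl | rfl <;> decide

/-- Classification of vectors of type (iii) in `L₆`: a nonzero `c ∈ ℤ⁶` has norm
`cᵀG₆⁻¹c = 1/3` and order `6` in the discriminant group iff `±c` is one of the two
listed vectors. -/
theorem L6_type_iii_classification (c : Fin 6 → ℤ) (hc : c ≠ 0) :
    ((fun i => (c i : ℚ)) ⬝ᵥ G6⁻¹.mulVec (fun i => (c i : ℚ)) = 1 / 3 ∧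
      IsLeast {k : ℕ | 0 < k ∧
        ∀ i, ∃ m : ℤ, (k : ℚ) * G6⁻¹.mulVec (fun i => (c i : ℚ)) i = (m : ℚ)} 6) ↔
    (c = ![0, 1, 0, 0, 0, 0] ∨ c = ![0, 0, 0, 0, 0, 1] ∨
      -c = ![0, 1, 0, 0, 0, 0] ∨ -c = ![0, 0, 0, 0, 0, 1]) :=
  L6_type_iii_classification_general c
end
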